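/- arXiv:1407.2053 — 3 statements merged into one kernel-verified Lean document; each statement's English description precedes it below -/
import Mathlib

section
/- Let G be a split graph with clique C(G) and maximal independent set S(G), and let D be a minimal dominating set of G. Then for every subset A ⊆ D ∩ C(G), the set A ∪ (S(G) \ N_G(A)) is a minimal dominating set of G. -/
/-!
Write `T = A ∪ (S \ N(A))`. A vertex of `S` is dominated by `A` or lies in `T`; a vertex of `C`
has a neighbour in `S` by maximality of `S`, and that neighbour lies in `T` unless it is adjacent
to `A`, in which case `A ≠ ∅` dominates all of the clique `C`. For minimality every `x ∈ T`
needs a private neighbour. A vertex of `S \ N(A)` is its own. For `x ∈ A`: if `A = {x}`, then `x`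
is its own; otherwise the private neighbour `p` of `x` with respect to `D` avoids the closed
neighbourhood of `A \ {x} ≠ ∅`, hence all of `C`, so `p ∈ S ∩ N(A)` and `p` stays private in `T`.
-/

open Set

variable {V : Type*}

/-- The closed neighbourhood `N_G[x]` of a vertex. -/
def closedNbhd (G : SimpleGraph V) (x : V) : Set V := insert x (G.neighborSet x)

/-- The closed neighbourhood `N_G[A]` of a set of vertices. -/
def closedNbhdSet (G : SimpleGraph V) (A : Set V) : Set V := ⋃ x ∈ A, closedNbhd G x

/-- The open neighbourhood `N_G(A) = N_G[A] \ A` of a set of vertices. -/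
def openNbhdSet (G : SimpleGraph V) (A : Set V) : Set V := closedNbhdSet G A \ A

/-- `D` is a dominating set of `G`. -/
def Dominates (G : SimpleGraph V) (D : Set V) : Prop := ∀ v, v ∈ closedNbhdSet G D

/-- `A` is an independent set of `G`. -/
def IsIndep (G : SimpleGraph V) (A : Set V) : Prop := A.Pairwise fun a b => ¬ G.Adj a b

/-- `(C, S)` is a split partition of `G`: `C` a clique, `S` an independent set,
together partitioning the vertex set. -/
def IsSplitPartition (G : SimpleGraph V) (C S : Set V) : Prop :=
  C ∪ S = univ ∧ C ∩ S = ∅ ∧ G.IsClique C ∧ IsIndep G S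

variable {G : SimpleGraph V} {A B C D S : Set V} {a p v x : V}

lemma mem_closedNbhd : v ∈ closedNbhd G a ↔ v = a ∨ G.Adj a v := by
  simp [closedNbhd, SimpleGraph.mem_neighborSet]

lemma mem_closedNbhdSet : v ∈ closedNbhdSet G A ↔ ∃ a ∈ A, v = a ∨ G.Adj a v := by
  simp [closedNbhdSet, mem_closedNbhd]

lemma closedNbhdSet_mono (h : A ⊆ B) : closedNbhdSet G A ⊆ closedNbhdSet G B :=
  biUnion_subset_biUnion_left h

lemma Dominates.mono (hA : Dominates G A) (h : A ⊆ B) : Dominates G B :=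
  fun v => closedNbhdSet_mono h (hA v)

lemma minimal_dominates_iff :
    Minimal (Dominates G) D ↔ Dominates G D ∧ ∀ x ∈ D, ∃ p, p ∉ closedNbhdSet G (D \ {x}) := by
  simp only [minimal_iff_forall_sdiff_singleton fun _ _ h hst => Dominates.mono h hst,
    Dominates, not_forall]

lemma exists_adj_of_maximal_isIndep (hS : Maximal (IsIndep G) S) (hv : v ∉ S) :
    ∃ s ∈ S, G.Adj v s := by
  by_contra! h
  exact hv <| hS.mem_of_prop_insert <|
    pairwise_insert.2 ⟨hS.1, fun s hs _ => ⟨h s hs, fun h' => h s hs h'.symm⟩⟩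

namespace IsSplitPartition

lemma mem_or_mem (h : IsSplitPartition G C S) (v : V) : v ∈ C ∨ v ∈ S :=
  (h.1 ▸ mem_univ v : v ∈ C ∪ S)

lemma notMem_right (h : IsSplitPartition G C S) (hv : v ∈ C) : v ∉ S :=
  fun hs => (h.2.1 ▸ ⟨hv, hs⟩ : v ∈ (∅ : Set V))

lemma mem_closedNbhdSet_of_mem_left (h : IsSplitPartition G C S) (hA : A ⊆ C) (hne : A.Nonempty)
    (hv : v ∈ C) : v ∈ closedNbhdSet G A := by
  obtain ⟨a, ha⟩ := hne
  refine mem_closedNbhdSet.2 ⟨a, ha, ?_⟩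
  by_cases hva : v = a
  · exact .inl hva
  · exact .inr (h.2.2.1 (hA ha) hv (Ne.symm hva))

lemma mem_openNbhdSet_of_adj (h : IsSplitPartition G C S) (hA : A ⊆ C) (ha : a ∈ A) (hv : v ∈ S)
    (hav : G.Adj a v) : v ∈ openNbhdSet G A :=
  ⟨mem_closedNbhdSet.2 ⟨a, ha, .inr hav⟩, fun hvA => h.notMem_right (hA hvA) hv⟩

lemma dominates_union_sdiff_openNbhdSet (h : IsSplitPartition G C S) (hS : Maximal (IsIndep G) S)
    (hA : A ⊆ C) : Dominates G (A ∪ (S \ openNbhdSet G A)) := by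
  intro v
  have hsub : A ⊆ A ∪ (S \ openNbhdSet G A) := subset_union_left
  rcases h.mem_or_mem v with hvC | hvS
  · obtain ⟨s, hsS, hvs⟩ := exists_adj_of_maximal_isIndep hS (h.notMem_right hvC)
    by_cases hsN : s ∈ openNbhdSet G A
    · obtain ⟨a, ha, -⟩ := mem_closedNbhdSet.1 hsN.1
      exact closedNbhdSet_mono hsub (h.mem_closedNbhdSet_of_mem_left hA ⟨a, ha⟩ hvC)
    · exact mem_closedNbhdSet.2 ⟨s, .inr ⟨hsS, hsN⟩, .inr hvs.symm⟩
  · by_cases hvN : v ∈ openNbhdSet G A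
    · exact closedNbhdSet_mono hsub hvN.1
    · exact mem_closedNbhdSet.2 ⟨v, .inr ⟨hvS, hvN⟩, .inl rfl⟩

lemma notMem_closedNbhdSet_sdiff_of_mem_right (h : IsSplitPartition G C S) (hA : A ⊆ C)
    (hx : x ∈ S \ openNbhdSet G A) :
    x ∉ closedNbhdSet G ((A ∪ (S \ openNbhdSet G A)) \ {x}) := by
  rw [mem_closedNbhdSet]
  rintro ⟨t, ⟨ht | ⟨htS, -⟩, htx⟩, rfl | hxt⟩
  · exact h.notMem_right (hA ht) hx.1
  · exact hx.2 (h.mem_openNbhdSet_of_adj hA ht hx.1 hxt)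
  · exact htx (mem_singleton _)
  · exact h.2.2.2 htS hx.1 htx hxt

lemma notMem_closedNbhdSet_sdiff_of_mem_left (h : IsSplitPartition G C S) (hA : A ⊆ C) (hx : x ∈ A)
    (hpx : p ∈ closedNbhd G x) (hpA : p ∉ closedNbhdSet G (A \ {x})) (hp : p ∈ S ∨ p = x) :
    p ∉ closedNbhdSet G ((A ∪ (S \ openNbhdSet G A)) \ {x}) := by
  rw [mem_closedNbhdSet]
  rintro ⟨t, ⟨htA | ⟨htS, htN⟩, htx⟩, hpt⟩
  · exact hpA (mem_closedNbhdSet.2 ⟨t, ⟨htA, htx⟩, hpt⟩)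
  rcases hp with hpS | rfl
  · rcases hpt with rfl | htp
    · have hpx : G.Adj x p :=
        (mem_closedNbhd.1 hpx).resolve_left fun hpx => h.notMem_right (hA (hpx ▸ hx)) hpS
      exact htN (h.mem_openNbhdSet_of_adj hA hx hpS hpx)
    · exact h.2.2.2 htS hpS (G.ne_of_adj htp) htp
  · rcases hpt with rfl | htp
    · exact htx (mem_singleton _)
    · exact htN (h.mem_openNbhdSet_of_adj hA hx htS htp.symm)

lemma exists_privateNbr_of_minimal (h : IsSplitPartition G C S) (hD : Minimal (Dominates G) D)
    (hA : A ⊆ D ∩ C) (hx : x ∈ A) :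
    ∃ p, p ∈ closedNbhd G x ∧ p ∉ closedNbhdSet G (A \ {x}) ∧ (p ∈ S ∨ p = x) := by
  have hAC : A ⊆ C := fun _ ha => (hA ha).2
  rcases (A \ {x}).eq_empty_or_nonempty with hAx | hAx
  · refine ⟨x, mem_closedNbhd.2 (.inl rfl), ?_, .inr rfl⟩
    simp [hAx, mem_closedNbhdSet]
  obtain ⟨p, hp⟩ : ∃ p, p ∉ closedNbhdSet G (D \ {x}) :=
    (minimal_dominates_iff.1 hD).2 x (hA hx).1
  have hpA : p ∉ closedNbhdSet G (A \ {x}) :=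
    fun hpA => hp (closedNbhdSet_mono (sdiff_subset_sdiff_left fun _ ha => (hA ha).1) hpA)
  have hpx : p ∈ closedNbhd G x := by
    obtain ⟨d, hd, hpd⟩ := mem_closedNbhdSet.1 (hD.1 p)
    obtain rfl : d = x := by_contra fun hdx => hp (mem_closedNbhdSet.2 ⟨d, ⟨hd, hdx⟩, hpd⟩)
    exact mem_closedNbhd.2 hpd
  refine ⟨p, hpx, hpA, .inl ?_⟩
  exact (h.mem_or_mem p).resolve_left fun hpC =>
    hpA (h.mem_closedNbhdSet_of_mem_left (sdiff_subset.trans hAC) hAx hpC)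

end IsSplitPartition

theorem stmt_11_general (G : SimpleGraph V) (C S : Set V)
    (hCS : IsSplitPartition G C S) (hSmax : Maximal (IsIndep G) S)
    (D : Set V) (hD : Minimal (Dominates G) D) (A : Set V) (hA : A ⊆ D ∩ C) :
    Minimal (Dominates G) (A ∪ (S \ openNbhdSet G A)) := by
  have hAC : A ⊆ C := fun _ ha => (hA ha).2
  refine minimal_dominates_iff.2 ⟨hCS.dominates_union_sdiff_openNbhdSet hSmax hAC, ?_⟩
  rintro x (hx | hx)
  · obtain ⟨p, hpx, hpA, hp⟩ := hCS.exists_privateNbr_of_minimal hD hA hx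
    exact ⟨p, hCS.notMem_closedNbhdSet_sdiff_of_mem_left hAC hx hpx hpA hp⟩
  · exact ⟨x, hCS.notMem_closedNbhdSet_sdiff_of_mem_right hAC hx⟩

/-- In a split graph, if `D` is a minimal dominating set, then for every `A ⊆ D ∩ C`,
the set `A ∪ (S \ N_G(A))` is a minimal dominating set. -/
theorem stmt_11 [Fintype V] (G : SimpleGraph V) (C S : Set V)
    (hCS : IsSplitPartition G C S) (hSmax : Maximal (IsIndep G) S)
    (D : Set V) (hD : Minimal (Dominates G) D) (A : Set V) (hA : A ⊆ D ∩ C) :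
    Minimal (Dominates G) (A ∪ (S \ openNbhdSet G A)) :=
  stmt_11_general G C S hCS hSmax D hD A hA
end

section
/- For every graph G, the minimal dominating sets of G coincide with the minimal dominating sets of its completion graph G_co. -/
open Set

variable {V : Type*}

/-- `IR` is a valid set of irredundant vertices of `G`: every member has an
inclusion-minimal closed neighbourhood, exactly one representative is kept per class of
vertices with equal closed neighbourhoods, and every vertex with a minimal closed
neighbourhood has a representative in `IR`. The remaining (redundant) vertices form
`IRᶜ = RN(G)`. -/
def IsIrrSet (G : SimpleGraph V) (IR : Set V) : Prop :=
  (∀ x ∈ IR, ∀ y : V, closedNbhd G y ⊆ closedNbhd G x → closedNbhd G y = closedNbhd G x) ∧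
  (∀ x ∈ IR, ∀ y ∈ IR, closedNbhd G x = closedNbhd G y → x = y) ∧
  (∀ x : V, (∀ y : V, closedNbhd G y ⊆ closedNbhd G x → closedNbhd G y = closedNbhd G x) →
    ∃ z ∈ IR, closedNbhd G z = closedNbhd G x)

/-- The completion `G_co` of `G` (w.r.t. the irredundant set `IR`): all edges between
distinct redundant vertices are added. -/
def completion (G : SimpleGraph V) (IR : Set V) : SimpleGraph V where
  Adj x y := G.Adj x y ∨ (x ≠ y ∧ x ∉ IR ∧ y ∉ IR)
  symm := by
    constructor
    intro x y h
    rcases h with h | ⟨hne, hx, hy⟩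
    · exact Or.inl h.symm
    · exact Or.inr ⟨hne.symm, hy, hx⟩
  loopless := by
    constructor
    intro x h
    rcases h with h | ⟨hne, _, _⟩
    · exact G.irrefl h
    · exact hne rfl

/-!
A dominating set of `G` still dominates the supergraph `G_co`. Conversely, every vertex `v`
has an irredundant vertex `z` with `N[z] ⊆ N[v]`, and no edge is added at `z`; so whichever
`d ∈ D` dominates `z` in `G_co` is a `G`-neighbour of `z`, hence lies in `N[v]` and
dominates `v` in `G`. Thus both graphs have the same dominating sets.
-/

lemma mem_closedNbhd_comm {G : SimpleGraph V} {a b : V} :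
    a ∈ closedNbhd G b ↔ b ∈ closedNbhd G a := by
  simp only [closedNbhd, Set.mem_insert_iff, SimpleGraph.mem_neighborSet, SimpleGraph.adj_comm,
    eq_comm]

lemma mem_closedNbhdSet_s12 {G : SimpleGraph V} {D : Set V} {v : V} :
    v ∈ closedNbhdSet G D ↔ ∃ d ∈ D, v ∈ closedNbhd G d := by
  simp only [closedNbhdSet, Set.mem_iUnion, exists_prop]

lemma closedNbhd_mono {G H : SimpleGraph V} (h : G ≤ H) (x : V) :
    closedNbhd G x ⊆ closedNbhd H x :=
  Set.insert_subset_insert fun _ hy => h hy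

lemma Dominates.mono_s12 {G H : SimpleGraph V} {D : Set V} (h : G ≤ H) (hD : Dominates G D) :
    Dominates H D := fun v => by
  obtain ⟨d, hd, hv⟩ := mem_closedNbhdSet_s12.mp (hD v)
  exact mem_closedNbhdSet_s12.mpr ⟨d, hd, closedNbhd_mono h d hv⟩

lemma le_completion (G : SimpleGraph V) (IR : Set V) : G ≤ completion G IR :=
  fun _ _ h => Or.inl h

lemma closedNbhd_completion_of_mem (G : SimpleGraph V) {IR : Set V} {z : V} (hz : z ∈ IR) :
    closedNbhd (completion G IR) z = closedNbhd G z := by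
  ext y
  simp only [closedNbhd, completion, Set.mem_insert_iff, SimpleGraph.mem_neighborSet]
  tauto

lemma IsIrrSet.exists_closedNbhd_subset [Finite V] {G : SimpleGraph V} {IR : Set V}
    (hIR : IsIrrSet G IR) (x : V) : ∃ z ∈ IR, closedNbhd G z ⊆ closedNbhd G x := by
  obtain ⟨_, hle, ⟨y, rfl⟩, hmin⟩ :=
    (Set.finite_range (closedNbhd G)).exists_le_minimal (Set.mem_range_self x)
  obtain ⟨z, hz, hzy⟩ := hIR.2.2 y fun w hw => hw.antisymm (hmin ⟨w, rfl⟩ hw)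
  exact ⟨z, hz, hzy ▸ hle⟩

lemma dominates_completion_iff [Finite V] {G : SimpleGraph V} {IR : Set V}
    (hIR : IsIrrSet G IR) {D : Set V} :
    Dominates (completion G IR) D ↔ Dominates G D := by
  refine ⟨fun hD v => ?_, Dominates.mono_s12 (le_completion G IR)⟩
  obtain ⟨z, hz, hzv⟩ := hIR.exists_closedNbhd_subset v
  obtain ⟨d, hd, hzd⟩ := mem_closedNbhdSet_s12.mp (hD z)
  have hdz : d ∈ closedNbhd G z := by
    rw [← closedNbhd_completion_of_mem G hz]
    exact mem_closedNbhd_comm.mp hzd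
  exact mem_closedNbhdSet_s12.mpr ⟨d, hd, mem_closedNbhd_comm.mp (hzv hdz)⟩

/-- The minimal dominating sets of `G` coincide with those of its completion `G_co`. -/
theorem stmt_12 [Fintype V] (G : SimpleGraph V) (IR : Set V) (hIR : IsIrrSet G IR) :
    {D : Set V | Minimal (Dominates G) D} =
      {D : Set V | Minimal (Dominates (completion G IR)) D} := by
  have hdom : Dominates (completion G IR) = Dominates G :=
    funext fun _ => propext (dominates_completion_iff hIR)
  rw [hdom]
end

section
/- For any graph G, the completion graph G_co is chordal if and only if G_co is a split graph. -/
open Set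

variable {V : Type*}

/-- A graph is chordal if it has no induced cycle of length at least 4. -/
def Chordal (G : SimpleGraph V) : Prop :=
  ∀ n : ℕ, 4 ≤ n → IsEmpty (SimpleGraph.cycleGraph n ↪g G)

/-- A graph is `P₆`-free if it has no induced path on 6 vertices. -/
def P6Free (G : SimpleGraph V) : Prop := IsEmpty (SimpleGraph.pathGraph 6 ↪g G)

/-- A graph is a split graph if its vertex set partitions into a clique and an
independent set. -/
def IsSplit (G : SimpleGraph V) : Prop :=
  ∃ C S : Set V, C ∪ S = Set.univ ∧ C ∩ S = ∅ ∧ G.IsClique C ∧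
    S.Pairwise fun a b => ¬ G.Adj a b

/-
A split graph is chordal: on an induced cycle of length at least 4, no two
consecutive vertices lie in the independent part and no two vertices at distance two lie in
the clique, which is impossible.

Conversely, the redundant vertices form a clique of `G_co`, so it suffices that two
irredundant vertices `x, y` are never adjacent. If they are, minimality and uniqueness of
`N[y]` give a neighbour `t` of `x` outside `N[y]`. In a chordal graph, prepending `t` to an
induced path starting with `x, y` gives a longer induced path (a first chord from `t` would
close an induced cycle of length at least 4). If `t` is redundant, every other vertex of the new
path is irredundant, since it is not adjacent to `t`; reversing the path then makes it start
with two irredundant vertices again. Iterating, we get induced paths with more vertices than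
`G` has.
-/

open SimpleGraph

section CycleGraph

lemma cycleGraph_adj_of_val_lt {N : ℕ} {a b : Fin N} (hab : a.val < b.val) :
    (cycleGraph N).Adj a b ↔ b.val = a.val + 1 ∨ (a.val = 0 ∧ b.val + 1 = N) := by
  rw [cycleGraph_adj', Fin.coe_sub_iff_lt.mpr hab, Fin.coe_sub_iff_le.mpr hab.le]
  omega

variable {m : ℕ}

lemma cycleGraph_adj_add_one (i : Fin (m + 4)) : (cycleGraph (m + 4)).Adj i (i + 1) := by
  simp [cycleGraph_adj]

lemma cycleGraph_not_adj_add_two (i : Fin (m + 4)) : ¬ (cycleGraph (m + 4)).Adj i (i + 2) := by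
  rw [cycleGraph_adj', sub_add_cancel_left, add_sub_cancel_left, Fin.val_neg', Fin.val_two,
    Nat.mod_eq_of_lt (by omega)]
  omega

lemma self_ne_add_two (i : Fin (m + 4)) : i ≠ i + 2 := by
  rw [ne_eq, left_eq_add, Fin.ext_iff, Fin.val_two]
  simp

end CycleGraph

theorem IsSplit.chordal {H : SimpleGraph V} (hH : IsSplit H) : Chordal H := by
  obtain ⟨C, S, hcover, -, hC, hS⟩ := hH
  intro n hn
  obtain ⟨m, rfl⟩ : ∃ m, n = m + 4 := ⟨n - 4, by omega⟩
  refine ⟨fun f => ?_⟩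
  have hS_of_notMem : ∀ v, v ∉ C → v ∈ S := fun v hv =>
    (hcover.symm ▸ Set.mem_univ v : v ∈ C ∪ S).resolve_left hv
  have consec : ∀ i, f i ∈ C ∨ f (i + 1) ∈ C := by
    by_contra! ⟨i, hi, hi1⟩
    have hadj := f.map_rel_iff.mpr (cycleGraph_adj_add_one i)
    exact hS (hS_of_notMem _ hi) (hS_of_notMem _ hi1) hadj.ne hadj
  have apart : ∀ i, f i ∈ C → f (i + 2) ∉ C := fun i hi hi2 =>
    cycleGraph_not_adj_add_two i
      (f.map_rel_iff.mp (hC hi hi2 (f.injective.ne (self_ne_add_two i))))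
  obtain ⟨i, hi⟩ : ∃ i, f i ∈ C := (consec 0).elim (⟨0, ·⟩) (⟨1, ·⟩)
  have h3 : f (i + 3) ∈ C := by
    have h := (consec (i + 2)).resolve_left (apart i hi)
    rwa [add_assoc] at h
  have h1 : f (i + 1) ∉ C := fun h1 => apart (i + 1) h1 (by rwa [add_assoc])
  have h2 := (consec (i + 1)).resolve_left h1
  rw [add_assoc] at h2
  exact apart i hi h2

def seqCons (t : V) (p : ℕ → V) : ℕ → V
  | 0 => t
  | k + 1 => p k

@[simp] lemma seqCons_zero (t : V) (p : ℕ → V) : seqCons t p 0 = t := rfl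

@[simp] lemma seqCons_succ (t : V) (p : ℕ → V) (k : ℕ) : seqCons t p (k + 1) = p k := rfl

def IsInducedPathSeq (H : SimpleGraph V) (m : ℕ) (p : ℕ → V) : Prop :=
  ∀ i j, i < j → j < m → p i ≠ p j ∧ (H.Adj (p i) (p j) ↔ j = i + 1)

theorem not_chordal_of_induced_cycle {H : SimpleGraph V} {n : ℕ} {q : ℕ → V} (hn : 4 ≤ n)
    (hq : ∀ i j, i < j → j < n →
      q i ≠ q j ∧ (H.Adj (q i) (q j) ↔ j = i + 1 ∨ (i = 0 ∧ j + 1 = n))) :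
    ¬ Chordal H := by
  intro hH
  have adj_iff : ∀ a b : Fin n, a.val < b.val →
      (H.Adj (q a) (q b) ↔ (cycleGraph n).Adj a b) := fun a b hab => by
    rw [cycleGraph_adj_of_val_lt hab]
    exact (hq a b hab b.isLt).2
  refine (hH n hn).false ⟨⟨fun k => q k, fun a b hab => ?_⟩, fun {a b} => ?_⟩
  · by_contra hne
    rcases Fin.lt_or_lt_of_ne hne with h | h
    · exact (hq a b h b.isLt).1 hab
    · exact (hq b a h a.isLt).1 hab.symm
  · rcases lt_trichotomy a b with h | rfl | h
    · exact adj_iff a b h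
    · simp
    · rw [H.adj_comm, (cycleGraph n).adj_comm]
      exact adj_iff b a h

namespace IsInducedPathSeq

variable {H : SimpleGraph V} {m n : ℕ} {p : ℕ → V} {t : V}

lemma of_le_one (hm : m ≤ 1) : IsInducedPathSeq H m p :=
  fun i j hij hj => by omega

lemma mono (hp : IsInducedPathSeq H m p) (hnm : n ≤ m) : IsInducedPathSeq H n p :=
  fun i j hij hj => hp i j hij (by omega)

lemma reverse (hp : IsInducedPathSeq H m p) : IsInducedPathSeq H m (fun i => p (m - 1 - i)) := by
  intro i j hij hj
  obtain ⟨hne, hadj⟩ := hp (m - 1 - j) (m - 1 - i) (by omega) (by omega)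
  exact ⟨hne.symm, by rw [H.adj_comm, hadj]; omega⟩

lemma card_le [Fintype V] (hp : IsInducedPathSeq H m p) : m ≤ Fintype.card V := by
  have hinj : Function.Injective (fun i : Fin m => p i) := fun a b hab => by
    by_contra hne
    rcases Fin.lt_or_lt_of_ne hne with h | h
    · exact (hp a b h b.isLt).1 hab
    · exact (hp b a h a.isLt).1 hab.symm
  simpa using Fintype.card_le_of_injective _ hinj

lemma ne_of_not_adj (hp : IsInducedPathSeq H m p) (hnm : n ≤ m) (h0 : H.Adj t (p 0))
    (h1 : t ≠ p 1) (hnadj : ∀ k, 1 ≤ k → k < n → ¬ H.Adj t (p k)) :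
    ∀ k < n, t ≠ p k
  | 0, _ => H.ne_of_adj h0
  | 1, _ => h1
  | k + 2, hk => fun ht => hnadj (k + 1) (by omega) (by omega)
      (ht ▸ (hp (k + 1) (k + 2) (by omega) (by omega)).2.mpr rfl).symm

lemma cons (hp : IsInducedPathSeq H n p) (hfresh : ∀ k < n, t ≠ p k)
    (hadj : ∀ k < n, (H.Adj t (p k) ↔ k = 0)) : IsInducedPathSeq H (n + 1) (seqCons t p) := by
  rintro (_ | i) (_ | j) hij hj
  · omega
  · simpa using ⟨hfresh j (by omega), hadj j (by omega)⟩
  · omega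
  · simpa using hp i j (by omega) (by omega)

lemma not_chordal_of_cons (hp : IsInducedPathSeq H n p) (hn : 3 ≤ n)
    (hfresh : ∀ k < n, t ≠ p k) (hadj : ∀ k < n, (H.Adj t (p k) ↔ k = 0 ∨ k + 1 = n)) :
    ¬ Chordal H := by
  refine not_chordal_of_induced_cycle (q := seqCons t p) (n := n + 1) (by omega) ?_
  rintro (_ | i) (_ | j) hij hj
  · omega
  · simpa using ⟨hfresh j (by omega), hadj j (by omega)⟩
  · omega
  · simpa using hp i j (by omega) (by omega)

theorem cons_of_chordal (hH : Chordal H) (hp : IsInducedPathSeq H m p)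
    (h0 : H.Adj t (p 0)) (h1 : ¬ H.Adj t (p 1)) (ht1 : t ≠ p 1) :
    IsInducedPathSeq H (m + 1) (seqCons t p) := by
  classical
  by_cases hchord : ∃ j, 2 ≤ j ∧ j < m ∧ H.Adj t (p j)
  · exfalso
    obtain ⟨hj2, hjm, hj⟩ := Nat.find_spec hchord
    have hmin : ∀ k, 1 ≤ k → k < Nat.find hchord → ¬ H.Adj t (p k) := fun k hk1 hk h => by
      rcases (show k = 1 ∨ 2 ≤ k by omega) with rfl | hk2
      · exact h1 h
      · exact Nat.find_min hchord hk ⟨hk2, by omega, h⟩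
    refine not_chordal_of_cons (t := t) (hp.mono (n := Nat.find hchord + 1) (by omega)) (by omega)
      (fun k hk => ?_) (fun k hk => ?_) hH
    · rcases (show k < Nat.find hchord ∨ k = Nat.find hchord by omega) with hk | rfl
      · exact hp.ne_of_not_adj hjm.le h0 ht1 hmin k hk
      · exact H.ne_of_adj hj
    · rcases (show k = 0 ∨ (1 ≤ k ∧ k < Nat.find hchord) ∨ k = Nat.find hchord by omega)
        with rfl | ⟨hk1, hk⟩ | rfl
      · simpa using h0
      · exact iff_of_false (hmin k hk1 hk) (by omega)
      · simpa using hj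
  · push Not at hchord
    have hnadj : ∀ k, 1 ≤ k → k < m → ¬ H.Adj t (p k) := fun k hk1 hk h => by
      rcases (show k = 1 ∨ 2 ≤ k by omega) with rfl | hk2
      · exact h1 h
      · exact hchord k hk2 hk h
    refine hp.cons (hp.ne_of_not_adj le_rfl h0 ht1 hnadj) (fun k hk => ?_)
    rcases Nat.eq_zero_or_pos k with rfl | hk0
    · simpa using h0
    · exact iff_of_false (hnadj k hk0 hk) hk0.ne'

end IsInducedPathSeq

section Completion

variable {G : SimpleGraph V} {IR : Set V} {x y : V}

lemma mem_closedNbhd_iff : y ∈ closedNbhd G x ↔ y = x ∨ G.Adj x y := Iff.rfl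

lemma completion_adj_iff_of_mem (hx : x ∈ IR) : (completion G IR).Adj x y ↔ G.Adj x y := by
  simp [completion, hx]

lemma mem_of_not_completion_adj (hx : x ∉ IR) (hxy : x ≠ y) (h : ¬ (completion G IR).Adj x y) :
    y ∈ IR := by
  by_contra hy
  exact h (Or.inr ⟨hxy, hx, hy⟩)

lemma IsIrrSet.not_closedNbhd_subset (hIR : IsIrrSet G IR) (hx : x ∈ IR) (hy : y ∈ IR)
    (hxy : x ≠ y) : ¬ closedNbhd G x ⊆ closedNbhd G y := fun h =>
  hxy (hIR.2.1 x hx y hy (hIR.1 y hy x h))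

lemma IsIrrSet.exists_longer_path (hIR : IsIrrSet G IR) (hch : Chordal (completion G IR))
    {m : ℕ} {p : ℕ → V} (hp : IsInducedPathSeq (completion G IR) m p) (hm : 2 ≤ m)
    (h0 : p 0 ∈ IR) (h1 : p 1 ∈ IR) :
    ∃ q, IsInducedPathSeq (completion G IR) (m + 1) q ∧ q 0 ∈ IR ∧ q 1 ∈ IR := by
  have h01 : G.Adj (p 0) (p 1) :=
    (completion_adj_iff_of_mem h0).mp ((hp 0 1 (by omega) (by omega)).2.mpr rfl)
  obtain ⟨t, ht0, ht1⟩ := Set.not_subset.mp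
    (hIR.not_closedNbhd_subset h0 h1 (hp 0 1 (by omega) (by omega)).1)
  rw [mem_closedNbhd_iff] at ht0 ht1
  push Not at ht1
  have htp0 : t ≠ p 0 := by
    rintro rfl
    exact ht1.2 h01.symm
  have hq := (hp.cons_of_chordal hch (t := t)
    ((completion_adj_iff_of_mem h0).mpr (ht0.resolve_left htp0)).symm
    (fun h => ht1.2 ((completion_adj_iff_of_mem h1).mp h.symm)) ht1.1)
  by_cases ht : t ∈ IR
  · exact ⟨_, hq, ht, h0⟩
  have hqIR : ∀ k, 1 ≤ k → k ≤ m → seqCons t p k ∈ IR := fun k hk1 hkm => by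
    rcases (show k = 1 ∨ 2 ≤ k by omega) with rfl | hk2
    · exact h0
    · obtain ⟨hne, hadj⟩ := hq 0 k (by omega) (by omega)
      exact mem_of_not_completion_adj ht hne fun h => by have := hadj.mp h; omega
  exact ⟨_, hq.reverse, hqIR _ (by omega) (by omega), hqIR _ (by omega) (by omega)⟩

lemma completion_isClique_compl : (completion G IR).IsClique IRᶜ :=
  fun _ hx _ hy hxy => Or.inr ⟨hxy, hx, hy⟩

lemma IsIrrSet.not_completion_adj_of_chordal [Fintype V] (hIR : IsIrrSet G IR)
    (hch : Chordal (completion G IR)) (hx : x ∈ IR) (hy : y ∈ IR) :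
    ¬ (completion G IR).Adj x y := by
  intro hxy
  have hlong : ∀ k, ∃ q, IsInducedPathSeq (completion G IR) (k + 2) q ∧ q 0 ∈ IR ∧ q 1 ∈ IR := by
    intro k
    induction k with
    | zero =>
      refine ⟨seqCons x fun _ => y, (IsInducedPathSeq.of_le_one le_rfl).cons
        (fun _ _ => (completion G IR).ne_of_adj hxy) (fun k hk => ?_), hx, hy⟩
      obtain rfl : k = 0 := by omega
      simpa using hxy
    | succ k ih =>
      obtain ⟨q, hq, h0, h1⟩ := ih
      exact hIR.exists_longer_path hch hq (by omega) h0 h1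
  obtain ⟨q, hq, -⟩ := hlong (Fintype.card V)
  have := hq.card_le
  omega

end Completion

/-- For any graph `G`, the completion `G_co` is chordal iff it is a split graph. -/
theorem stmt_17 [Fintype V] (G : SimpleGraph V) (IR : Set V) (hIR : IsIrrSet G IR) :
    Chordal (completion G IR) ↔ IsSplit (completion G IR) :=
  ⟨fun hch => ⟨IRᶜ, IR, compl_union_self IR, compl_inter_self IR, completion_isClique_compl,
    fun _ hx _ hy _ => hIR.not_completion_adj_of_chordal hch hx hy⟩, IsSplit.chordal⟩
end
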